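/- arXiv:1401.3408 — 2 statements merged into one kernel-verified Lean document; each statement's English description precedes it below -/
import Mathlib

section
/- Let L be a nonnegative random variable whose cdf under measure P_∞ is continuous and strictly increasing on [0,∞), and suppose E_∞[L] = 1 and E_0[f(L)] is defined via a second measure P_0 with P_0(L < ν) = E_∞[L 1{L < ν}]. Then the function g(ν) = P_0(L < ν)/P_∞(L ≥ ν) is continuous and strictly increasing in ν on the set where P_∞(L ≥ ν) > 0, with g(0) = 0 and g(ν) → ∞ as ν → ∞; hence for every γ ≥ 1 the equation g(ν) = γ has a unique solution. -/
/-!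
Write `g = N / D` with `N ν = E[L; L < ν]` and `D ν = P(L ≥ ν)`. Continuity of the cdf means `L`
has no atoms, so `N` is continuous by dominated convergence; strict monotonicity of the cdf puts
positive mass in every slice `a ≤ L < b`, on which `L > 0` almost surely, so `N` is strictly
increasing. On the other side `D = 1 - cdf` is continuous, positive, decreasing and tends to `0`.
Hence `g` increases strictly and continuously from `g 0 = 0` to `∞`, and each level `γ ≥ 0` is hit
exactly once by the intermediate value theorem.
-/

open MeasureTheory Filter Set
open scoped Topology

section RatioOfMonotone

lemma strictMonoOn_div_of_antitoneOn {N D : ℝ → ℝ} {s : Set ℝ} (hN : StrictMonoOn N s)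
    (hN0 : ∀ x ∈ s, 0 ≤ N x) (hD : AntitoneOn D s) (hDpos : ∀ x ∈ s, 0 < D x) :
    StrictMonoOn (fun x => N x / D x) s := fun a ha b hb hab =>
  calc N a / D a ≤ N a / D b := div_le_div_of_nonneg_left (hN0 a ha) (hDpos b hb) (hD ha hb hab.le)
    _ < N b / D b := div_lt_div_of_pos_right (hN ha hb hab) (hDpos b hb)

lemma tendsto_div_atTop_of_tendsto_nhdsGT_zero {α : Type*} {l : Filter α} {N D : α → ℝ} {c : ℝ}
    (hc : 0 < c) (hN : ∀ᶠ x in l, c ≤ N x) (hD : Tendsto D l (𝓝[>] 0)) :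
    Tendsto (fun x => N x / D x) l atTop := by
  refine tendsto_atTop_mono' _ ?_ (hD.inv_tendsto_nhdsGT_zero.const_mul_atTop hc)
  filter_upwards [hN, hD.eventually self_mem_nhdsWithin] with x hNx (hDx : 0 < D x)
  change c * (D x)⁻¹ ≤ N x / D x
  rw [← div_eq_mul_inv]
  gcongr

lemma existsUnique_eq_of_strictMonoOn_Ici {α δ : Type*} [ConditionallyCompleteLinearOrder α]
    [TopologicalSpace α] [OrderTopology α] [DenselyOrdered α] [LinearOrder δ]
    [TopologicalSpace δ] [OrderClosedTopology δ] {f : α → δ} {a : α} {γ : δ}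
    (hcont : ContinuousOn f (Ici a)) (hmono : StrictMonoOn f (Ici a))
    (htop : Tendsto f atTop atTop) (hγ : f a ≤ γ) : ∃! x, a ≤ x ∧ f x = γ := by
  obtain ⟨x, hx, rfl⟩ := intermediate_value_Ici hcont htop hγ
  exact ⟨x, ⟨hx, rfl⟩, fun y hy => hmono.injOn hy.1 hx hy.2⟩

end RatioOfMonotone

section SetIntegralBelowLevel

variable {Ω : Type*} [MeasurableSpace Ω] {μ : Measure Ω} {X : Ω → ℝ}

lemma measure_eq_zero_of_continuous_measureReal_lt [IsFiniteMeasure μ] (hX : Measurable X)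
    (hF : Continuous fun ν => μ.real {ω | X ω < ν}) (c : ℝ) : μ {ω | X ω = c} = 0 := by
  have hle : ∀ u, c < u →
      μ.real {ω | X ω = c} ≤ μ.real {ω | X ω < u} - μ.real {ω | X ω < c} := fun u hu =>
    calc μ.real {ω | X ω = c} ≤ μ.real ({ω | X ω < u} \ {ω | X ω < c}) :=
          measureReal_mono fun ω (h : X ω = c) => ⟨show X ω < u from h ▸ hu, h.not_lt⟩
      _ = _ := measureReal_sdiff (fun ω (h : X ω < c) => h.trans hu) (hX measurableSet_Iio)
  have hlim : Tendsto (fun u => μ.real {ω | X ω < u} - μ.real {ω | X ω < c}) (𝓝[>] c) (𝓝 0) := by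
    simpa using ((hF.tendsto c).mono_left nhdsWithin_le_nhds).sub_const (μ.real {ω | X ω < c})
  have hle0 : μ.real {ω | X ω = c} ≤ 0 :=
    ge_of_tendsto hlim (eventually_nhdsWithin_of_forall hle)
  exact (measureReal_eq_zero_iff (measure_ne_top μ _)).1 (hle0.antisymm measureReal_nonneg)

lemma continuous_setIntegral_setOf_lt {E : Type*} [NormedAddCommGroup E] [NormedSpace ℝ E]
    {f : Ω → E} (hX : Measurable X) (hf : Integrable f μ) (hatom : ∀ c, μ {ω | X ω = c} = 0) :
    Continuous fun ν => ∫ ω in {ω | X ω < ν}, f ω ∂μ := by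
  have hms : ∀ ν, MeasurableSet {ω | X ω < ν} := fun ν => hX measurableSet_Iio
  simp_rw [← integral_indicator (hms _)]
  refine continuous_iff_continuousAt.2 fun ν => continuousAt_of_dominated
    (Eventually.of_forall fun u => hf.aestronglyMeasurable.indicator (hms u))
    (Eventually.of_forall fun u => Eventually.of_forall fun ω => norm_indicator_le_norm_self _ _)
    hf.norm ?_
  filter_upwards [measure_eq_zero_iff_ae_notMem.1 (hatom ν)] with ω (hω : X ω ≠ ν)
  have hev : ∀ᶠ u in 𝓝 ν, (X ω < u ↔ X ω < ν) := by
    rcases hω.lt_or_gt with h | h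
    · filter_upwards [Ioi_mem_nhds h] with u hu using iff_of_true hu h
    · filter_upwards [Iio_mem_nhds h] with u hu using iff_of_false hu.le.not_gt h.le.not_gt
  refine (continuousAt_const (y := {ω | X ω < ν}.indicator f ω)).congr ?_
  filter_upwards [hev] with u hu
  simp only [indicator, mem_ofPred_eq, hu]

lemma setIntegral_pos_of_ae_pos {f : Ω → ℝ} {A : Set Ω} (hf : IntegrableOn f A μ)
    (hpos : ∀ᵐ ω ∂μ.restrict A, 0 < f ω) (hA : μ A ≠ 0) : 0 < ∫ ω in A, f ω ∂μ := by
  have hnonneg : 0 ≤ᵐ[μ.restrict A] f := hpos.mono fun _ h => h.le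
  refine (setIntegral_nonneg_of_ae_restrict hnonneg).lt_of_ne' fun h0 => hA ?_
  have hzero := (setIntegral_eq_zero_iff_of_nonneg_ae hnonneg hf).1 h0
  have hfalse : ∀ᵐ ω ∂μ.restrict A, False := by
    filter_upwards [hpos, hzero] with ω h1 h2
    exact h1.ne' h2
  rwa [eventually_false_iff_eq_bot, ae_eq_bot, Measure.restrict_eq_zero] at hfalse

lemma strictMonoOn_setIntegral_setOf_lt [IsFiniteMeasure μ] {f : Ω → ℝ} {s : Set ℝ}
    (hX : Measurable X) (hf : Integrable f μ) (hfpos : ∀ᵐ ω ∂μ, 0 < f ω)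
    (hF : StrictMonoOn (fun ν => μ.real {ω | X ω < ν}) s) :
    StrictMonoOn (fun ν => ∫ ω in {ω | X ω < ν}, f ω ∂μ) s := by
  intro a ha b hb hab
  have hsplit : {ω | X ω < b} = {ω | X ω < a} ∪ X ⁻¹' Ico a b := by
    change X ⁻¹' Iio b = X ⁻¹' Iio a ∪ X ⁻¹' Ico a b
    rw [← preimage_union, Iio_union_Ico_eq_Iio hab.le]
  have hdisj : Disjoint {ω | X ω < a} (X ⁻¹' Ico a b) :=
    ((Iio_disjoint_Ici le_rfl).mono_right Ico_subset_Ici_self).preimage X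
  have hslice : MeasurableSet (X ⁻¹' Ico a b) := hX measurableSet_Ico
  have hF_ab : μ.real {ω | X ω < a} < μ.real {ω | X ω < b} := hF ha hb hab
  rw [hsplit, measureReal_union hdisj hslice] at hF_ab
  have hslice_pos : μ (X ⁻¹' Ico a b) ≠ 0 :=
    (measureReal_ne_zero_iff (measure_ne_top μ _)).1 (by linarith)
  have := setIntegral_pos_of_ae_pos hf.integrableOn (ae_restrict_of_ae hfpos) hslice_pos
  simp only [hsplit, setIntegral_union hdisj hslice hf.integrableOn hf.integrableOn]
  linarith

end SetIntegralBelowLevel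

section Tail

variable {Ω : Type*} [MeasurableSpace Ω] {μ : Measure Ω} {X : Ω → ℝ}

lemma measureReal_setOf_le_eq_one_sub [IsProbabilityMeasure μ] (hX : Measurable X) (ν : ℝ) :
    μ.real {ω | ν ≤ X ω} = 1 - μ.real {ω | X ω < ν} := by
  have hcompl : {ω | ν ≤ X ω} = {ω | X ω < ν}ᶜ := by
    ext ω
    simp
  rw [hcompl]
  exact probReal_compl_eq_one_sub (hX measurableSet_Iio)

lemma measureReal_setOf_le_pos [IsProbabilityMeasure μ] (hX : Measurable X) {s : Set ℝ}
    (hF : StrictMonoOn (fun ν => μ.real {ω | X ω < ν}) s) {a b : ℝ} (ha : a ∈ s) (hb : b ∈ s)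
    (hab : a < b) : 0 < μ.real {ω | a ≤ X ω} := by
  rw [measureReal_setOf_le_eq_one_sub hX]
  linarith [hF ha hb hab, measureReal_le_one (μ := μ) (s := {ω | X ω < b})]

lemma antitone_measureReal_setOf_le [IsFiniteMeasure μ] :
    Antitone fun ν => μ.real {ω | ν ≤ X ω} :=
  fun _ _ hab => measureReal_mono fun _ h => hab.trans h

lemma tendsto_measureReal_setOf_le_atTop [IsFiniteMeasure μ] (hX : Measurable X) :
    Tendsto (fun ν => μ.real {ω | ν ≤ X ω}) atTop (𝓝 0) := by
  have hlim : Tendsto (fun ν => μ {ω | ν ≤ X ω}) atTop (𝓝 (μ (⋂ ν : ℝ, {ω | ν ≤ X ω}))) :=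
    tendsto_measure_iInter_atTop (fun ν => (hX measurableSet_Ici).nullMeasurableSet)
      (fun a b hab ω hω => hab.trans hω) ⟨0, measure_ne_top μ _⟩
  have hempty : (⋂ ν : ℝ, {ω | ν ≤ X ω}) = ∅ :=
    eq_empty_of_forall_notMem fun ω hω => (lt_add_one (X ω)).not_ge (mem_iInter.1 hω (X ω + 1))
  rw [hempty, measure_empty] at hlim
  exact (ENNReal.tendsto_toReal ENNReal.zero_ne_top).comp hlim

end Tail

theorem shewhart_ratio_threshold_general {Ω : Type*} [MeasurableSpace Ω] (μ : Measure Ω)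
    [IsProbabilityMeasure μ] (L : Ω → ℝ) (hLm : Measurable L) (hLpos : ∀ ω, 0 ≤ L ω)
    (hLint : Integrable L μ)
    (hcdf_cont : Continuous fun ν : ℝ => (μ {ω | L ω < ν}).toReal)
    (hcdf_mono : StrictMonoOn (fun ν : ℝ => (μ {ω | L ω < ν}).toReal) (Set.Ici (0 : ℝ))) :
    (fun ν : ℝ => (∫ ω in {ω | L ω < ν}, L ω ∂μ) / (μ {ω | ν ≤ L ω}).toReal) 0 = 0 ∧
    StrictMonoOn (fun ν : ℝ => (∫ ω in {ω | L ω < ν}, L ω ∂μ) / (μ {ω | ν ≤ L ω}).toReal)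
      {ν : ℝ | 0 ≤ ν ∧ μ {ω | ν ≤ L ω} ≠ 0} ∧
    ContinuousOn (fun ν : ℝ => (∫ ω in {ω | L ω < ν}, L ω ∂μ) / (μ {ω | ν ≤ L ω}).toReal)
      {ν : ℝ | 0 ≤ ν ∧ μ {ω | ν ≤ L ω} ≠ 0} ∧
    Filter.Tendsto
      (fun ν : ℝ => (∫ ω in {ω | L ω < ν}, L ω ∂μ) / (μ {ω | ν ≤ L ω}).toReal)
      Filter.atTop Filter.atTop ∧
    ∀ γ : ℝ, 1 ≤ γ →
      ∃! ν : ℝ, 0 ≤ ν ∧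
        (∫ ω in {ω | L ω < ν}, L ω ∂μ) / (μ {ω | ν ≤ L ω}).toReal = γ := by
  simp only [← measureReal_def] at hcdf_cont hcdf_mono ⊢
  have hatom := measure_eq_zero_of_continuous_measureReal_lt hLm hcdf_cont
  have hL_ae_pos : ∀ᵐ ω ∂μ, 0 < L ω := by
    filter_upwards [measure_eq_zero_iff_ae_notMem.1 (hatom 0)] with ω (hω : L ω ≠ 0)
    exact (hLpos ω).lt_of_ne' hω
  have hD_pos : ∀ ν ∈ Ici (0 : ℝ), 0 < μ.real {ω | ν ≤ L ω} := fun ν hν =>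
    measureReal_setOf_le_pos hLm hcdf_mono hν (mem_Ici.2 (le_add_of_le_of_nonneg hν zero_le_one))
      (lt_add_one ν)
  have hD_cont : Continuous fun ν => μ.real {ω | ν ≤ L ω} := by
    simp only [measureReal_setOf_le_eq_one_sub hLm]
    exact continuous_const.sub hcdf_cont
  have hD_lim : Tendsto (fun ν => μ.real {ω | ν ≤ L ω}) atTop (𝓝[>] 0) :=
    tendsto_nhdsWithin_iff.2 ⟨tendsto_measureReal_setOf_le_atTop hLm,
      (eventually_ge_atTop 0).mono hD_pos⟩
  have hN_cont := continuous_setIntegral_setOf_lt hLm hLint hatom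
  have hN_mono := strictMonoOn_setIntegral_setOf_lt hLm hLint hL_ae_pos hcdf_mono
  have hN0 : ∫ ω in {ω | L ω < 0}, L ω ∂μ = 0 := by
    simp [(hLpos _).not_gt]
  have hN_nonneg : ∀ ν ∈ Ici (0 : ℝ), 0 ≤ ∫ ω in {ω | L ω < ν}, L ω ∂μ := fun ν _ =>
    setIntegral_nonneg (hLm measurableSet_Iio) fun ω _ => hLpos ω
  have hS : {ν : ℝ | 0 ≤ ν ∧ μ {ω | ν ≤ L ω} ≠ 0} = Ici 0 :=
    Subset.antisymm (fun ν hν => hν.1) fun ν hν =>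
      ⟨hν, (measureReal_ne_zero_iff (measure_ne_top μ _)).1 (hD_pos ν hν).ne'⟩
  have hg0 : (∫ ω in {ω | L ω < 0}, L ω ∂μ) / μ.real {ω | 0 ≤ L ω} = 0 := by
    rw [hN0, zero_div]
  have hg_mono := strictMonoOn_div_of_antitoneOn hN_mono hN_nonneg
    (antitone_measureReal_setOf_le.antitoneOn _) hD_pos
  have hg_cont := hN_cont.continuousOn.div hD_cont.continuousOn fun ν hν => (hD_pos ν hν).ne'
  have hN1_pos : 0 < ∫ ω in {ω | L ω < 1}, L ω ∂μ :=
    hN0 ▸ hN_mono self_mem_Ici (mem_Ici.2 zero_le_one) one_pos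
  have hg_top := tendsto_div_atTop_of_tendsto_nhdsGT_zero hN1_pos
    ((eventually_ge_atTop 1).mono fun ν hν =>
      hN_mono.monotoneOn (mem_Ici.2 zero_le_one) (mem_Ici.2 (zero_le_one.trans hν)) hν) hD_lim
  rw [hS]
  exact ⟨hg0, hg_mono, hg_cont, hg_top, fun γ hγ =>
    existsUnique_eq_of_strictMonoOn_Ici hg_cont hg_mono hg_top (hg0.trans_le (by linarith))⟩

/-- Properties of `g(ν) = P_0(L < ν)/P_∞(L ≥ ν)` where `L` is a nonnegative likelihood
ratio with `E_∞[L] = 1` and `P_0(L < ν) = E_∞[L 1{L < ν}]`: `g` vanishes at `0`, is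
continuous and strictly increasing on the relevant set, tends to `∞`, and for each
`γ ≥ 1` the equation `g(ν) = γ` has a unique solution. -/
theorem shewhart_ratio_threshold {Ω : Type*} [MeasurableSpace Ω] (μ : Measure Ω)
    [IsProbabilityMeasure μ] (L : Ω → ℝ) (hLm : Measurable L) (hLpos : ∀ ω, 0 ≤ L ω)
    (hLint : Integrable L μ) (hL1 : ∫ ω, L ω ∂μ = 1)
    (hcdf_cont : Continuous fun ν : ℝ => (μ {ω | L ω < ν}).toReal)
    (hcdf_mono : StrictMonoOn (fun ν : ℝ => (μ {ω | L ω < ν}).toReal) (Set.Ici (0 : ℝ))) :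
    (fun ν : ℝ => (∫ ω in {ω | L ω < ν}, L ω ∂μ) / (μ {ω | ν ≤ L ω}).toReal) 0 = 0 ∧
    StrictMonoOn (fun ν : ℝ => (∫ ω in {ω | L ω < ν}, L ω ∂μ) / (μ {ω | ν ≤ L ω}).toReal)
      {ν : ℝ | 0 ≤ ν ∧ μ {ω | ν ≤ L ω} ≠ 0} ∧
    ContinuousOn (fun ν : ℝ => (∫ ω in {ω | L ω < ν}, L ω ∂μ) / (μ {ω | ν ≤ L ω}).toReal)
      {ν : ℝ | 0 ≤ ν ∧ μ {ω | ν ≤ L ω} ≠ 0} ∧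
    Filter.Tendsto
      (fun ν : ℝ => (∫ ω in {ω | L ω < ν}, L ω ∂μ) / (μ {ω | ν ≤ L ω}).toReal)
      Filter.atTop Filter.atTop ∧
    ∀ γ : ℝ, 1 ≤ γ →
      ∃! ν : ℝ, 0 ≤ ν ∧
        (∫ ω in {ω | L ω < ν}, L ω ∂μ) / (μ {ω | ν ≤ L ω}).toReal = γ :=
  shewhart_ratio_threshold_general μ L hLm hLpos hLint hcdf_cont hcdf_mono
end

section
/- Let q ∈ [0,1] and let ℓ¹, ℓ² be nonnegative reals with the property that (1−q)(1−ℓ¹)^+ + q(1−ℓ²)^+ > 1 − ν for a threshold ν satisfying min{ q + (1−q)·inf_{A₁∩A₂ᶜ} ℓ¹, (1−q) + q·inf_{A₁ᶜ∩A₂} ℓ² } ≥ ν and ν ≤ 1, where A_i = {ℓⁱ ≤ 1}. Then ℓ¹ ≤ 1, ℓ² ≤ 1, and (1−q)ℓ¹ + qℓ² < ν. -/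
/-- Pointwise lemma in the proof of Theorem 6, case iii): let `ℓ¹, ℓ²` be nonnegative
functions (likelihood ratios as functions of the observation), `q ∈ [0,1]`, and `ν ≤ 1` a
threshold satisfying `ν ≤ q + (1−q)·inf_{A₁∩A₂ᶜ} ℓ¹` and `ν ≤ (1−q) + q·inf_{A₁ᶜ∩A₂} ℓ²`
(where `A_i = {ℓⁱ ≤ 1}`, the infimum conditions stated as bounds over all points of the
sets). If at a point `x`, `(1−q)(1−ℓ¹x)⁺ + q(1−ℓ²x)⁺ > 1−ν`, then `ℓ¹x ≤ 1`, `ℓ²x ≤ 1`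
and `(1−q)ℓ¹x + qℓ²x < ν`. -/
theorem shewhart_pointwise_equivalence {X : Type*} (ℓ1 ℓ2 : X → ℝ)
    (hℓ1 : ∀ y, 0 ≤ ℓ1 y) (hℓ2 : ∀ y, 0 ≤ ℓ2 y)
    (q ν : ℝ) (hq : q ∈ Set.Icc (0 : ℝ) 1) (hν1 : ν ≤ 1)
    (hbound1 : ∀ y, ℓ1 y ≤ 1 → ¬ℓ2 y ≤ 1 → ν ≤ q + (1 - q) * ℓ1 y)
    (hbound2 : ∀ y, ¬ℓ1 y ≤ 1 → ℓ2 y ≤ 1 → ν ≤ (1 - q) + q * ℓ2 y)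
    (x : X) (hx : 1 - ν < (1 - q) * max (1 - ℓ1 x) 0 + q * max (1 - ℓ2 x) 0) :
    ℓ1 x ≤ 1 ∧ ℓ2 x ≤ 1 ∧ (1 - q) * ℓ1 x + q * ℓ2 x < ν := by
  obtain ⟨hq0, hq1⟩ := hq
  by_cases h1 : ℓ1 x ≤ 1 <;> by_cases h2 : ℓ2 x ≤ 1
  · refine ⟨h1, h2, ?_⟩
    rw [max_eq_left (by linarith), max_eq_left (by linarith)] at hx
    nlinarith
  · exfalso
    have := hbound1 x h1 h2
    rw [max_eq_left (by linarith), max_eq_right (by linarith)] at hx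
    nlinarith
  · exfalso
    have := hbound2 x h1 h2
    rw [max_eq_right (by linarith), max_eq_left (by linarith)] at hx
    nlinarith
  · exfalso
    rw [max_eq_right (by linarith), max_eq_right (by linarith)] at hx
    nlinarith
end
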